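/- arXiv:1404.0452 — 3 statements merged into one kernel-verified Lean document; each statement's English description precedes it below -/
import Mathlib

section
/- Let B be a real m-th order n-dimensional symmetric B tensor, and let Ĵ(B) = { i ∈ {1,…,n} : B has at least one positive off-diagonal entry in its i-th row } be nonempty. For i ∈ Ĵ(B) let d_i be the largest off-diagonal entry in the i-th row of B, and set J₁ = Ĵ(B) and h₁ = min { d_i : i ∈ J₁ }. Then h₁ > 0 and B − h₁ E^{J₁} is again a symmetric B tensor. -/
open Finset

variable {m n : ℕ}

/-- The homogeneous form `A xᵐ` of an `m`-th order `n`-dimensional tensor `A`. -/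
noncomputable def tApply (A : (Fin m → Fin n) → ℝ) (x : Fin n → ℝ) : ℝ :=
  ∑ f : Fin m → Fin n, A f * ∏ j, x (f j)

/-- A tensor is symmetric if its entries are invariant under any permutation of the indices. -/
def IsSymmT (A : (Fin m → Fin n) → ℝ) : Prop :=
  ∀ (σ : Equiv.Perm (Fin m)) (f : Fin m → Fin n), A (f ∘ σ) = A f

/-- The `i`-th component of the vector `A x^{m-1}`:
`Σ_{i₂,…,i_m} a_{i i₂ ⋯ i_m} x_{i₂} ⋯ x_{i_m}`. -/
noncomputable def tVec [NeZero m] (A : (Fin m → Fin n) → ℝ) (x : Fin n → ℝ) (i : Fin n) : ℝ :=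
  ∑ f ∈ univ.filter (fun f : Fin m → Fin n => f 0 = i),
    A f * ∏ j ∈ univ.erase (0 : Fin m), x (f j)

/-- The `i`-th component of the vector `A x^{m-1}` for complex `x`. -/
noncomputable def tVecC [NeZero m] (A : (Fin m → Fin n) → ℝ) (x : Fin n → ℂ) (i : Fin n) : ℂ :=
  ∑ f ∈ univ.filter (fun f : Fin m → Fin n => f 0 = i),
    (A f : ℂ) * ∏ j ∈ univ.erase (0 : Fin m), x (f j)

/-- The sum of the absolute values of the off-diagonal entries in the `i`-th row of `A`. -/
noncomputable def offDiagSum [NeZero m] (A : (Fin m → Fin n) → ℝ) (i : Fin n) : ℝ :=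
  ∑ f ∈ univ.filter (fun f : Fin m → Fin n => f 0 = i ∧ f ≠ (fun _ => i)), |A f|

/-- A diagonally dominated tensor. -/
def DiagDom [NeZero m] (A : (Fin m → Fin n) → ℝ) : Prop :=
  ∀ i : Fin n, offDiagSum A i ≤ A (fun _ => i)

/-- A strictly diagonally dominated tensor. -/
def StrictDiagDom [NeZero m] (A : (Fin m → Fin n) → ℝ) : Prop :=
  ∀ i : Fin n, offDiagSum A i < A (fun _ => i)

/-- The sum of all the entries in the `i`-th row of `A`. -/
noncomputable def rowSum [NeZero m] (A : (Fin m → Fin n) → ℝ) (i : Fin n) : ℝ :=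
  ∑ f ∈ univ.filter (fun f : Fin m → Fin n => f 0 = i), A f

/-- A B₀ tensor. -/
def IsB0 [NeZero m] (A : (Fin m → Fin n) → ℝ) : Prop :=
  ∀ i : Fin n, 0 ≤ rowSum A i ∧
    ∀ f : Fin m → Fin n, f 0 = i → f ≠ (fun _ => i) →
      A f ≤ (1 / (n : ℝ) ^ (m - 1)) * rowSum A i

/-- A B tensor. -/
def IsB [NeZero m] (A : (Fin m → Fin n) → ℝ) : Prop :=
  ∀ i : Fin n, 0 < rowSum A i ∧
    ∀ f : Fin m → Fin n, f 0 = i → f ≠ (fun _ => i) →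
      A f < (1 / (n : ℝ) ^ (m - 1)) * rowSum A i

/-- A Z tensor: all off-diagonal entries are non-positive. -/
def IsZ [NeZero m] (A : (Fin m → Fin n) → ℝ) : Prop :=
  ∀ (i : Fin n) (f : Fin m → Fin n), f 0 = i → f ≠ (fun _ => i) → A f ≤ 0

/-- The partially all one tensor `E^J`. -/
noncomputable def allOne (m : ℕ) {n : ℕ} (J : Finset (Fin n)) : (Fin m → Fin n) → ℝ :=
  fun f => if ∀ j, f j ∈ J then 1 else 0

/-- `Ĵ(B)`: the set of rows of `B` with at least one positive off-diagonal entry. -/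
noncomputable def hatJ [NeZero m] (B : (Fin m → Fin n) → ℝ) : Finset (Fin n) :=
  univ.filter fun i => ∃ f : Fin m → Fin n, f 0 = i ∧ f ≠ (fun _ => i) ∧ 0 < B f

section AuxLemmas

variable [NeZero m]

lemma card_row_aux (i : Fin n) :
    ((univ : Finset (Fin m → Fin n)).filter (fun f => f 0 = i)).card = n ^ (m - 1) := by
  rw [← Fintype.card_subtype]
  have e : {f : Fin m → Fin n // f 0 = i} ≃ ({j : Fin m // j ≠ 0} → Fin n) :=
    { toFun := fun f j => f.1 j.1
      invFun := fun g => ⟨fun j => if h : j = 0 then i else g ⟨j, h⟩, by simp⟩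
      left_inv := by
        rintro ⟨f, hf⟩
        ext j
        by_cases h : j = 0 <;> simp [h, hf]
      right_inv := by
        intro g
        funext j
        simp [j.2] }
  rw [Fintype.card_congr e, Fintype.card_fun, Fintype.card_fin]
  congr 1
  have h1 : Fintype.card {j : Fin m // ¬ (j = (0 : Fin m))} =
      Fintype.card (Fin m) - Fintype.card {j : Fin m // j = (0 : Fin m)} :=
    Fintype.card_subtype_compl _
  simpa [Fintype.card_subtype_eq] using h1

lemma allOne_nonneg (J : Finset (Fin n)) (f : Fin m → Fin n) : 0 ≤ allOne m J f := by
  unfold allOne; split <;> norm_num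

lemma allOne_le_one (J : Finset (Fin n)) (f : Fin m → Fin n) : allOne m J f ≤ 1 := by
  unfold allOne; split <;> norm_num

lemma neg_offdiag {B : (Fin m → Fin n) → ℝ} (hsym : IsSymmT B) {i k : Fin n}
    (hk : k ∉ hatJ B) (f : Fin m → Fin n) (hf0 : f 0 = i) (j : Fin m) (hfj : f j = k)
    (hik : i ≠ k) : B f ≤ 0 := by
  have hknot : ∀ g : Fin m → Fin n, g 0 = k → g ≠ (fun _ => k) → B g ≤ 0 := by
    intro g hg0 hgne
    by_contra h
    push_neg at h
    exact hk (mem_filter.mpr ⟨mem_univ _, g, hg0, hgne, h⟩)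
  have key : B (f ∘ (Equiv.swap (0 : Fin m) j)) = B f := hsym _ f
  rw [← key]
  apply hknot
  · simp [Function.comp, Equiv.swap_apply_left, hfj]
  · intro h
    have := congrFun h j
    simp [Function.comp, Equiv.swap_apply_right, hf0] at this
    exact hik this

end AuxLemmas

/-- one step of the decomposition for a symmetric B tensor `B` with
`Ĵ(B) ≠ ∅`: with `d i` the largest off-diagonal entry in row `i` and
`h₁ = min {d i : i ∈ Ĵ(B)}`, we have `h₁ > 0` and `B − h₁ E^{Ĵ(B)}` is again a symmetric
B tensor. -/
theorem b_tensor_decomposition_step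
    {m n : ℕ} [NeZero m] (hm : 2 ≤ m) (hn : 1 ≤ n)
    (B : (Fin m → Fin n) → ℝ) (hsym : IsSymmT B) (hB : IsB B)
    (hne : (hatJ B).Nonempty) (d : Fin n → ℝ) (h1 : ℝ)
    (hd : ∀ i ∈ hatJ B,
      IsGreatest {y : ℝ | ∃ f : Fin m → Fin n, f 0 = i ∧ f ≠ (fun _ => i) ∧ B f = y} (d i))
    (hh : IsLeast {y : ℝ | ∃ i ∈ hatJ B, d i = y} h1) :
    0 < h1 ∧ IsSymmT (fun f => B f - h1 * allOne m (hatJ B) f) ∧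
      IsB (fun f => B f - h1 * allOne m (hatJ B) f) := by
  set J := hatJ B with hJ
  -- positivity of h1
  have h1pos : 0 < h1 := by
    obtain ⟨i0, hi0, hdi0⟩ := hh.1
    obtain ⟨_, f, hf0, hfne, hfpos⟩ := mem_filter.mp hi0
    have hle : B f ≤ d i0 := (hd i0 hi0).2 ⟨f, hf0, hfne, rfl⟩
    linarith [hfpos, hdi0 ▸ hle]
  -- symmetry
  have hsymC : IsSymmT (fun f => B f - h1 * allOne m J f) := by
    intro σ f
    simp only
    rw [hsym σ f]
    have : allOne m J (f ∘ σ) = allOne m J f := by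
      unfold allOne
      have hiff : (∀ j, (f ∘ σ) j ∈ J) ↔ (∀ j, f j ∈ J) := by
        constructor
        · intro h j
          have := h (σ.symm j)
          simpa using this
        · intro h j
          exact h (σ j)
      simp only [hiff]
    rw [this]
  refine ⟨h1pos, hsymC, ?_⟩
  -- the B tensor property
  have hN : (0:ℝ) < (n : ℝ) ^ (m - 1) := by positivity
  intro i
  set N : ℝ := (n : ℝ) ^ (m - 1) with hNdef
  set S : ℝ := ∑ f ∈ univ.filter (fun f : Fin m → Fin n => f 0 = i), allOne m J f with hSdef
  have hrow : rowSum (fun f => B f - h1 * allOne m J f) i = rowSum B i - h1 * S := by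
    rw [rowSum, rowSum, hSdef, Finset.sum_sub_distrib, Finset.mul_sum]
  have hS0 : 0 ≤ S := Finset.sum_nonneg fun f _ => allOne_nonneg J f
  have hSN : S ≤ N := by
    have := Finset.sum_le_card_nsmul (univ.filter (fun f : Fin m → Fin n => f 0 = i))
      (allOne m J) 1 (fun f _ => allOne_le_one J f)
    rw [card_row_aux i, nsmul_eq_mul, mul_one] at this
    push_cast at this
    exact this
  by_cases hiJ : i ∈ J
  · -- row i meets J
    obtain ⟨g, hg0, hgne, hgd⟩ := (hd i hiJ).1
    have hh1d : h1 ≤ d i := hh.2 ⟨i, hiJ, rfl⟩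
    have hgR : B g < 1 / N * rowSum B i := (hB i).2 g hg0 hgne
    have hh1R : h1 * N < rowSum B i := by
      have : h1 < 1 / N * rowSum B i := lt_of_le_of_lt (hgd ▸ hh1d) hgR
      calc h1 * N < (1 / N * rowSum B i) * N := by
            exact mul_lt_mul_of_pos_right this hN
        _ = rowSum B i := by field_simp
    have hh1S : h1 * S ≤ h1 * N := mul_le_mul_of_nonneg_left hSN h1pos.le
    have hrowpos : 0 < rowSum B i - h1 * S := by linarith
    refine ⟨by rw [hrow]; exact hrowpos, ?_⟩
    intro f hf0 hfne
    simp only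
    rw [hrow]
    by_cases hall : ∀ j, f j ∈ J
    · have hone : allOne m J f = 1 := by unfold allOne; simp [hall]
      rw [hone, mul_one]
      have hBf : B f < 1 / N * rowSum B i := (hB i).2 f hf0 hfne
      have hBfN : B f * N < rowSum B i := by
        calc B f * N < (1 / N * rowSum B i) * N := mul_lt_mul_of_pos_right hBf hN
          _ = rowSum B i := by field_simp
      rw [show (1:ℝ)/N * (rowSum B i - h1 * S) = (rowSum B i - h1 * S)/N by ring,
        lt_div_iff₀ hN]
      nlinarith
    · have hzero : allOne m J f = 0 := by unfold allOne; simp [hall]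
      rw [hzero, mul_zero, sub_zero]
      push_neg at hall
      obtain ⟨j, hj⟩ := hall
      have hBf0 : B f ≤ 0 := by
        refine neg_offdiag hsym hj f hf0 j rfl ?_
        intro h
        exact hj (h ▸ hiJ)
      have : 0 < 1 / N * (rowSum B i - h1 * S) := by positivity
      linarith
  · -- row i does not meet J : nothing changes in this row
    have hzero : ∀ f ∈ univ.filter (fun f : Fin m → Fin n => f 0 = i),
        allOne m J f = 0 := by
      intro f hf
      have hf0 : f 0 = i := (mem_filter.mp hf).2
      unfold allOne
      rw [if_neg]
      intro h
      exact hiJ (hf0 ▸ h 0)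
    have hSzero : S = 0 := Finset.sum_eq_zero hzero
    have hrow' : rowSum (fun f => B f - h1 * allOne m J f) i = rowSum B i := by
      rw [hrow, hSzero, mul_zero, sub_zero]
    refine ⟨by rw [hrow']; exact (hB i).1, ?_⟩
    intro f hf0 hfne
    simp only
    rw [hrow']
    have hfz : allOne m J f = 0 := by
      unfold allOne
      rw [if_neg]
      intro h
      exact hiJ (hf0 ▸ h 0)
    rw [hfz, mul_zero, sub_zero]
    exact (hB i).2 f hf0 hfne
end

section
/- Let A be a real m-th order n-dimensional diagonally dominated tensor (not necessarily symmetric). Then every H-eigenvalue of A is nonnegative: if λ ∈ ℝ and x ∈ ℝⁿ is nonzero with A x^{m-1} = λ x^{[m-1]}, then λ ≥ 0. -/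
open Finset

variable {m n : ℕ}

/-- every H-eigenvalue of a (not necessarily symmetric) diagonally dominated
tensor is nonnegative. -/
theorem diag_dom_H_eigenvalues_nonneg
    {m n : ℕ} [NeZero m] (hm : 2 ≤ m) (hn : 1 ≤ n)
    (A : (Fin m → Fin n) → ℝ) (hdd : DiagDom A)
    (lam : ℝ) (x : Fin n → ℝ) (hx : x ≠ 0)
    (heig : ∀ i : Fin n, tVec A x i = lam * x i ^ (m - 1)) :
    0 ≤ lam := by
  obtain ⟨i, -, hi⟩ := Finset.exists_max_image (univ : Finset (Fin n)) (fun j => |x j|)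
    ⟨⟨0, hn⟩, mem_univ _⟩
  have hi : ∀ j, |x j| ≤ |x i| := fun j => hi j (mem_univ j)
  have hxi : 0 < |x i| := by
    obtain ⟨j, hj⟩ := Function.ne_iff.mp hx
    exact lt_of_lt_of_le (abs_pos.mpr hj) (hi j)
  set c : Fin m → Fin n := fun _ => i with hc
  have hcard : (univ.erase (0 : Fin m)).card = m - 1 := by
    rw [card_erase_of_mem (mem_univ _), card_univ, Fintype.card_fin]
  have hprod : ∏ j ∈ univ.erase (0 : Fin m), x (c j) = x i ^ (m - 1) := by
    simp [hc, Finset.prod_const, hcard]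
  have hcmem : c ∈ univ.filter (fun f : Fin m → Fin n => f 0 = i) := by simp [hc]
  have hset : (univ.filter (fun f : Fin m → Fin n => f 0 = i)).erase c
      = univ.filter (fun f : Fin m → Fin n => f 0 = i ∧ f ≠ (fun _ => i)) := by
    ext f
    simp only [Finset.mem_erase, Finset.mem_filter, Finset.mem_univ, true_and, hc]
    tauto
  have hsplit : tVec A x i = A c * x i ^ (m - 1) +
      ∑ f ∈ univ.filter (fun f : Fin m → Fin n => f 0 = i ∧ f ≠ (fun _ => i)),
        A f * ∏ j ∈ univ.erase (0 : Fin m), x (f j) := by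
    rw [tVec, ← Finset.add_sum_erase _ _ hcmem, hprod, hset]
  set S := ∑ f ∈ univ.filter (fun f : Fin m → Fin n => f 0 = i ∧ f ≠ (fun _ => i)),
      A f * ∏ j ∈ univ.erase (0 : Fin m), x (f j) with hS
  have hSbound : |S| ≤ offDiagSum A i * |x i| ^ (m - 1) := by
    rw [offDiagSum, Finset.sum_mul]
    refine (Finset.abs_sum_le_sum_abs _ _).trans (Finset.sum_le_sum fun f hf => ?_)
    rw [abs_mul]
    refine mul_le_mul_of_nonneg_left ?_ (abs_nonneg _)
    calc |∏ j ∈ univ.erase (0 : Fin m), x (f j)|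
        = ∏ j ∈ univ.erase (0 : Fin m), |x (f j)| := by rw [Finset.abs_prod]
      _ ≤ ∏ j ∈ univ.erase (0 : Fin m), |x i| :=
          Finset.prod_le_prod (fun _ _ => abs_nonneg _) (fun j _ => hi _)
      _ = |x i| ^ (m - 1) := by rw [Finset.prod_const, hcard]
  have hkey : (lam - A c) * x i ^ (m - 1) = S := by
    have := heig i
    rw [hsplit] at this
    linarith
  have habs : |lam - A c| * |x i| ^ (m - 1) ≤ offDiagSum A i * |x i| ^ (m - 1) := by
    calc |lam - A c| * |x i| ^ (m - 1) = |(lam - A c) * x i ^ (m - 1)| := by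
          rw [abs_mul, abs_pow]
      _ = |S| := by rw [hkey]
      _ ≤ _ := hSbound
  have hpow : (0 : ℝ) < |x i| ^ (m - 1) := pow_pos hxi _
  have h1 : |lam - A c| ≤ offDiagSum A i := le_of_mul_le_mul_right habs hpow
  have h2 := abs_le.mp h1
  have h3 := hdd i
  linarith [h2.1]
end

section
/- Let A be a real m-th order n-dimensional strictly diagonally dominated tensor (not necessarily symmetric). Then every H-eigenvalue of A is positive: if λ ∈ ℝ and x ∈ ℝⁿ is nonzero with A x^{m-1} = λ x^{[m-1]}, then λ > 0. -/
open Finset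

variable {m n : ℕ}

/-- every H-eigenvalue of a (not necessarily symmetric) strictly diagonally
dominated tensor is positive. -/
theorem strict_diag_dom_H_eigenvalues_pos
    {m n : ℕ} [NeZero m] (hm : 2 ≤ m) (hn : 1 ≤ n)
    (A : (Fin m → Fin n) → ℝ) (hdd : StrictDiagDom A)
    (lam : ℝ) (x : Fin n → ℝ) (hx : x ≠ 0)
    (heig : ∀ i : Fin n, tVec A x i = lam * x i ^ (m - 1)) :
    0 < lam := by
  -- pick i maximizing |x i|
  have hn' : (univ : Finset (Fin n)).Nonempty := by
    simpa [Finset.univ_nonempty_iff] using Fin.pos_iff_nonempty.mp hn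
  obtain ⟨i, -, hmax⟩ := Finset.exists_max_image univ (fun j => |x j|) hn'
  have hxi : 0 < |x i| := by
    rcases Function.ne_iff.mp hx with ⟨j, hj⟩
    have : 0 < |x j| := abs_pos.mpr (by simpa using hj)
    exact lt_of_lt_of_le this (hmax j (mem_univ j))
  set d : Fin m → Fin n := fun _ => i with hd
  have hcard : (univ.erase (0 : Fin m)).card = m - 1 := by
    simp [Finset.card_erase_of_mem]
  -- split tVec
  have hdmem : d ∈ univ.filter (fun f : Fin m → Fin n => f 0 = i) := by simp [hd]
  have hsplit : tVec A x i = A d * x i ^ (m - 1) +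
      ∑ f ∈ (univ.filter (fun f : Fin m → Fin n => f 0 = i)).erase d,
        A f * ∏ j ∈ univ.erase (0 : Fin m), x (f j) := by
    rw [tVec, ← Finset.add_sum_erase _ _ hdmem]
    congr 1
    rw [hd]
    simp [Finset.prod_const, hcard]
  have key : (lam - A d) * x i ^ (m - 1) =
      ∑ f ∈ (univ.filter (fun f : Fin m → Fin n => f 0 = i)).erase d,
        A f * ∏ j ∈ univ.erase (0 : Fin m), x (f j) := by
    have := heig i
    rw [hsplit] at this
    linarith
  -- bound
  have hboundterm : ∀ f ∈ (univ.filter (fun f : Fin m → Fin n => f 0 = i)).erase d,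
      |A f * ∏ j ∈ univ.erase (0 : Fin m), x (f j)| ≤ |A f| * |x i| ^ (m - 1) := by
    intro f _
    rw [abs_mul]
    apply mul_le_mul_of_nonneg_left _ (abs_nonneg _)
    rw [abs_prod, ← hcard, ← Finset.prod_const]
    exact Finset.prod_le_prod (fun j _ => abs_nonneg _) (fun j _ => hmax (f j) (mem_univ _))
  have herase : (univ.filter (fun f : Fin m → Fin n => f 0 = i)).erase d =
      univ.filter (fun f : Fin m → Fin n => f 0 = i ∧ f ≠ (fun _ => i)) := by
    ext f
    simp [hd, and_comm]
  have hbound : |lam - A d| * |x i| ^ (m - 1) ≤ offDiagSum A i * |x i| ^ (m - 1) := by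
    calc |lam - A d| * |x i| ^ (m - 1) = |(lam - A d) * x i ^ (m - 1)| := by
          rw [abs_mul, abs_pow]
      _ ≤ ∑ f ∈ (univ.filter (fun f : Fin m → Fin n => f 0 = i)).erase d,
            |A f * ∏ j ∈ univ.erase (0 : Fin m), x (f j)| := by
          rw [key]; exact Finset.abs_sum_le_sum_abs _ _
      _ ≤ ∑ f ∈ (univ.filter (fun f : Fin m → Fin n => f 0 = i)).erase d,
            |A f| * |x i| ^ (m - 1) := Finset.sum_le_sum hboundterm
      _ = offDiagSum A i * |x i| ^ (m - 1) := by
          rw [herase, offDiagSum, Finset.sum_mul]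
  have hxp : 0 < |x i| ^ (m - 1) := pow_pos hxi _
  have h1 : |lam - A d| ≤ offDiagSum A i := le_of_mul_le_mul_right hbound hxp
  have h2 := hdd i
  rw [offDiagSum] at h1 h2
  have := abs_le.mp h1
  simp only [hd] at *
  linarith [this.1, this.2]
end
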